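/- arXiv:2209.08862 — 2 statements merged into one kernel-verified Lean document; each statement's English description precedes it below -/
import Mathlib

section
/- Under NAG with L-smooth convex f, 0 < s ≤ 1/L and r > 2, one has lim_{k→∞} k² · (min_{0 ≤ i ≤ k} f(y_i) - f(x*)) = 0. -/
/-!
Along the iteration, the energy
`E k = (k + r - 1)² (f (x k) - f xs) + ‖k • (y k - x k) + r • (y k - xs)‖² / (2 s)`
drops at each step by at least
`((r - 2) k + (r - 1)²) (f (x k) - f xs) + s r (k + r) / 2 ‖g (y k)‖²`:
combine the gradient step from `y k` with convexity at `x k` (weight `k`) and with the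
sharpened bound at the minimiser (weight `r`). For `r > 2` these drops are summable, and since
`f (y k) ≤ f (x (k + 1)) + s ‖g (y k)‖²`, so is `(k + 1) (f (y k) - f xs)`. A nonnegative
sequence with `∑ (k + 1) aₖ < ∞` has `k² min_{i ≤ k} aᵢ ≤ 4 ∑_{i ≥ k/2} (i + 1) aᵢ → 0`.
-/

open Set Filter Topology
open scoped RealInnerProductSpace

section SmoothConvex

variable {E : Type*} [NormedAddCommGroup E] [InnerProductSpace ℝ E] [CompleteSpace E]
  {f : E → ℝ} {g : E → E} {L s : ℝ}

theorem hasDerivAt_comp_lineMap (hgrad : ∀ z, HasGradientAt f (g z) z) (u v : E) (t : ℝ) :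
    HasDerivAt (fun t : ℝ => f (u + t • (v - u))) ⟪g (u + t • (v - u)), v - u⟫ t := by
  have hline : HasDerivAt (fun t : ℝ => u + t • (v - u)) (v - u) t := by
    simpa using ((hasDerivAt_id t).smul_const (v - u)).const_add u
  simpa [Function.comp_def] using (hgrad _).hasFDerivAt.comp_hasDerivAt t hline

theorem ConvexOn.add_inner_gradient_le (hconv : ConvexOn ℝ univ f)
    (hgrad : ∀ z, HasGradientAt f (g z) z) (u v : E) :
    f u + ⟪g u, v - u⟫ ≤ f v := by
  have hφ : ConvexOn ℝ univ fun t : ℝ => f (u + t • (v - u)) := by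
    have := hconv.comp_affineMap (AffineMap.lineMap u v)
    simpa [Function.comp_def, AffineMap.lineMap_apply, add_comm] using this
  have := hφ.le_slope_of_hasDerivAt (mem_univ 0) (mem_univ 1) one_pos
    (by simpa using hasDerivAt_comp_lineMap hgrad u v 0)
  simp only [slope_def_field] at this
  norm_num at this
  linarith

theorem descent_lemma (hgrad : ∀ z, HasGradientAt f (g z) z)
    (hlip : ∀ z w, ‖g z - g w‖ ≤ L * ‖z - w‖) (u v : E) :
    f v ≤ f u + ⟪g u, v - u⟫ + L / 2 * ‖v - u‖ ^ 2 := by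
  set φ : ℝ → ℝ := fun t => f (u + t • (v - u)) - t * ⟪g u, v - u⟫ - L / 2 * t ^ 2 * ‖v - u‖ ^ 2
  have hφ' : ∀ t, HasDerivAt φ
      (⟪g (u + t • (v - u)), v - u⟫ - ⟪g u, v - u⟫ - L * t * ‖v - u‖ ^ 2) t := by
    intro t
    have := ((hasDerivAt_comp_lineMap hgrad u v t).sub
      ((hasDerivAt_id t).mul_const ⟪g u, v - u⟫)).sub
      (((hasDerivAt_pow 2 t).const_mul (L / 2)).mul_const (‖v - u‖ ^ 2))
    refine this.congr_deriv ?_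
    simp only [one_mul, pow_one, Nat.cast_ofNat, Nat.add_one_sub_one]
    ring
  have hanti : AntitoneOn φ (Ici 0) := by
    refine antitoneOn_of_hasDerivWithinAt_nonpos (convex_Ici 0)
      (fun t _ => (hφ' t).continuousAt.continuousWithinAt)
      (fun t _ => (hφ' t).hasDerivWithinAt) fun t ht => ?_
    rw [interior_Ici, mem_Ioi] at ht
    -- Cauchy–Schwarz and the Lipschitz bound on `g` along the segment
    have hcs := real_inner_le_norm (g (u + t • (v - u)) - g u) (v - u)
    have hl := hlip (u + t • (v - u)) u
    rw [add_sub_cancel_left, norm_smul, Real.norm_of_nonneg ht.le] at hl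
    rw [← inner_sub_left]
    nlinarith [mul_le_mul_of_nonneg_right hl (norm_nonneg (v - u))]
  have := hanti self_mem_Ici (mem_Ici.2 zero_le_one) zero_le_one
  simp [φ] at this
  linarith

theorem IsLocalMin.hasGradientAt_eq_zero {a : E} {g' : E} (h : IsLocalMin f a)
    (hf : HasGradientAt f g' a) : g' = 0 := by
  simpa using h.hasFDerivAt_eq_zero hf.hasFDerivAt

theorem add_inner_gradient_add_norm_sq_le_of_isMin (hconv : ConvexOn ℝ univ f)
    (hgrad : ∀ z, HasGradientAt f (g z) z) (hlip : ∀ z w, ‖g z - g w‖ ≤ L * ‖z - w‖)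
    {xs : E} (hmin : ∀ z, f xs ≤ f z) (hs : 0 ≤ s) (hsL : s * L ≤ 1) (w : E) :
    f w + ⟪g w, xs - w⟫ + s / 2 * ‖g w‖ ^ 2 ≤ f xs := by
  have hg : g xs = 0 :=
    IsLocalMin.hasGradientAt_eq_zero (Eventually.of_forall hmin) (hgrad xs)
  -- compare `f` at `w` and at `xs` through the point `xs + s • g w`
  have hup := descent_lemma hgrad hlip xs (xs + s • g w)
  have hlow := hconv.add_inner_gradient_le hgrad w (xs + s • g w)
  rw [hg, inner_zero_left, add_sub_cancel_left, norm_smul, Real.norm_of_nonneg hs] at hup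
  rw [show xs + s • g w - w = (xs - w) + s • g w by abel, inner_add_right,
    real_inner_smul_right, real_inner_self_eq_norm_sq] at hlow
  nlinarith [mul_nonneg (mul_nonneg (sub_nonneg.2 hsL) hs) (sq_nonneg ‖g w‖)]

theorem apply_sub_smul_gradient_le (hconv : ConvexOn ℝ univ f)
    (hgrad : ∀ z, HasGradientAt f (g z) z) (hlip : ∀ z w, ‖g z - g w‖ ≤ L * ‖z - w‖)
    (hs : 0 ≤ s) (hsL : s * L ≤ 1) (y x : E) :
    f (y - s • g y) ≤ f x + ⟪g y, y - x⟫ - s / 2 * ‖g y‖ ^ 2 := by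
  have hup := descent_lemma hgrad hlip y (y - s • g y)
  have hlow := hconv.add_inner_gradient_le hgrad y x
  rw [sub_sub_cancel_left, inner_neg_right, real_inner_smul_right, real_inner_self_eq_norm_sq,
    norm_neg, norm_smul, Real.norm_of_nonneg hs] at hup
  rw [← neg_sub, inner_neg_right] at hlow
  nlinarith [mul_nonneg (mul_nonneg (sub_nonneg.2 hsL) hs) (sq_nonneg ‖g y‖)]

theorem apply_sub_smul_gradient_le_of_isMin (hconv : ConvexOn ℝ univ f)
    (hgrad : ∀ z, HasGradientAt f (g z) z) (hlip : ∀ z w, ‖g z - g w‖ ≤ L * ‖z - w‖)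
    {xs : E} (hmin : ∀ z, f xs ≤ f z) (hs : 0 ≤ s) (hsL : s * L ≤ 1) (y : E) :
    f (y - s • g y) ≤ f xs + ⟪g y, y - xs⟫ - s * ‖g y‖ ^ 2 := by
  have h₁ := apply_sub_smul_gradient_le hconv hgrad hlip hs hsL y y
  have h₂ := add_inner_gradient_add_norm_sq_le_of_isMin hconv hgrad hlip hmin hs hsL y
  rw [sub_self, inner_zero_right] at h₁
  rw [← neg_sub, inner_neg_right] at h₂
  linarith

theorem apply_le_apply_sub_smul_gradient_add (hconv : ConvexOn ℝ univ f)
    (hgrad : ∀ z, HasGradientAt f (g z) z) (y : E) :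
    f y ≤ f (y - s • g y) + s * ‖g y‖ ^ 2 := by
  have := hconv.add_inner_gradient_le hgrad y (y - s • g y)
  rw [sub_sub_cancel_left, inner_neg_right, real_inner_smul_right,
    real_inner_self_eq_norm_sq] at this
  linarith

end SmoothConvex

section Lyapunov

variable {E : Type*} [NormedAddCommGroup E] [InnerProductSpace ℝ E]

theorem lyapunov_step {a b s δ δ' : ℝ} {v p q : E} (ha : 0 ≤ a) (hb : 0 ≤ b) (hs : 0 < s)
    (h₁ : δ' ≤ δ + ⟪v, p⟫ - s / 2 * ‖v‖ ^ 2) (h₂ : δ' ≤ ⟪v, q⟫ - s * ‖v‖ ^ 2) :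
    (a + b) ^ 2 * δ' + ‖a • p + b • q - (s * (a + b)) • v‖ ^ 2 / (2 * s)
        + s * b * (a + b) / 2 * ‖v‖ ^ 2
      ≤ a * (a + b) * δ + ‖a • p + b • q‖ ^ 2 / (2 * s) := by
  set w := a • p + b • q
  have hvw : ⟪v, w⟫ = a * ⟪v, p⟫ + b * ⟪v, q⟫ := by
    simp only [w, inner_add_right, real_inner_smul_right]
  have hcomb : (a + b) * δ' ≤ a * δ + ⟪v, w⟫ - s * (a + 2 * b) / 2 * ‖v‖ ^ 2 := by
    nlinarith [mul_le_mul_of_nonneg_left h₁ ha, mul_le_mul_of_nonneg_left h₂ hb]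
  have hnorm : ‖w - (s * (a + b)) • v‖ ^ 2
      = ‖w‖ ^ 2 - 2 * (s * (a + b)) * ⟪v, w⟫ + (s * (a + b)) ^ 2 * ‖v‖ ^ 2 := by
    rw [norm_sub_sq_real, real_inner_smul_right, real_inner_comm, norm_smul, mul_pow,
      Real.norm_eq_abs, sq_abs]
    ring
  rw [hnorm, ← sub_nonneg]
  have key : 0 ≤ (a + b) * (a * δ + ⟪v, w⟫ - s * (a + 2 * b) / 2 * ‖v‖ ^ 2 - (a + b) * δ') :=
    mul_nonneg (by linarith) (by linarith)
  field_simp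
  nlinarith [key]

end Lyapunov

section Sequences

open Finset

theorem summable_of_succ_add_le {V D : ℕ → ℝ} (hV : ∀ k, 0 ≤ V k) (hD : ∀ k, 0 ≤ D k)
    (h : ∀ k, V (k + 1) + D k ≤ V k) : Summable D := by
  refine summable_of_sum_range_le hD (c := V 0) fun n => ?_
  calc ∑ k ∈ range n, D k ≤ ∑ k ∈ range n, (V k - V (k + 1)) :=
        sum_le_sum fun k _ => by linarith [h k]
    _ = V 0 - V n := sum_range_sub' V n
    _ ≤ V 0 := by linarith [hV n]

theorem sq_mul_inf'_le_four_mul_tsum {a : ℕ → ℝ} (ha : ∀ i, 0 ≤ a i)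
    (h : Summable fun i : ℕ => ((i : ℝ) + 1) * a i) (k : ℕ) :
    (k : ℝ) ^ 2 * (range (k + 1)).inf' nonempty_range_add_one a
      ≤ 4 * ∑' i : ℕ, (((i + k / 2 : ℕ) : ℝ) + 1) * a (i + k / 2) := by
  set m := k / 2
  set μ := (range (k + 1)).inf' nonempty_range_add_one a
  have hμ : 0 ≤ μ := le_inf' _ _ fun i _ => ha i
  -- `Ico m (k + 1)` has about `k / 2` indices, each of weight at least `k / 2`
  have hcount : (k : ℝ) ^ 2 ≤ 4 * (((k + 1 - m : ℕ) : ℝ) * ((m : ℝ) + 1)) := by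
    have h₁ : 2 * (m : ℝ) ≤ k := by exact_mod_cast Nat.mul_div_le k 2
    have h₂ : (k : ℝ) ≤ 2 * m + 1 := by norm_cast; omega
    push_cast [Nat.cast_sub (show m ≤ k + 1 by omega)]
    nlinarith
  have hwindow : (((k + 1 - m : ℕ) : ℝ) * ((m : ℝ) + 1)) * μ
      ≤ ∑ i ∈ Ico m (k + 1), ((i : ℝ) + 1) * a i := by
    rw [← Nat.card_Ico, mul_assoc, ← nsmul_eq_mul]
    refine card_nsmul_le_sum _ _ _ fun i hi => ?_
    rw [Finset.mem_Ico] at hi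
    have hi' : (m : ℝ) ≤ i := by exact_mod_cast hi.1
    exact mul_le_mul (by linarith) (inf'_le _ (mem_range.2 hi.2)) hμ (by positivity)
  have htail : ∑ i ∈ Ico m (k + 1), ((i : ℝ) + 1) * a i
      ≤ ∑' i, (((i + m : ℕ) : ℝ) + 1) * a (i + m) := by
    rw [sum_Ico_eq_sum_range]
    simp_rw [add_comm m]
    exact ((summable_nat_add_iff m).2 h).sum_le_tsum _ fun i _ => mul_nonneg (by positivity) (ha _)
  calc (k : ℝ) ^ 2 * μ ≤ 4 * (((k + 1 - m : ℕ) : ℝ) * ((m : ℝ) + 1)) * μ :=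
        mul_le_mul_of_nonneg_right hcount hμ
    _ ≤ _ := by rw [mul_assoc]; linarith

theorem tendsto_sq_mul_inf'_of_summable {a : ℕ → ℝ} (ha : ∀ i, 0 ≤ a i)
    (h : Summable fun i : ℕ => ((i : ℝ) + 1) * a i) :
    Tendsto (fun k : ℕ => (k : ℝ) ^ 2 * (range (k + 1)).inf' nonempty_range_add_one a)
      atTop (𝓝 0) := by
  have htail : Tendsto (fun k : ℕ => 4 * ∑' i : ℕ, (((i + k / 2 : ℕ) : ℝ) + 1) * a (i + k / 2))
      atTop (𝓝 0) := by
    simpa using ((tendsto_sum_nat_add fun i => ((i : ℝ) + 1) * a i).comp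
      (Nat.tendsto_div_const_atTop two_ne_zero)).const_mul 4
  refine tendsto_of_tendsto_of_tendsto_of_le_of_le tendsto_const_nhds htail
    (fun k => mul_nonneg (sq_nonneg _) (le_inf' _ _ fun i _ => ha i))
    (sq_mul_inf'_le_four_mul_tsum ha h)

end Sequences

section Nesterov

variable {E : Type*} [NormedAddCommGroup E] {g : E → E} {xs : E} {x y : ℕ → E} {s r : ℝ}

noncomputable def nesterovDecrease (f : E → ℝ) (g : E → E) (xs : E) (x y : ℕ → E) (s r : ℝ)
    (k : ℕ) : ℝ :=
  ((r - 2) * k + (r - 1) ^ 2) * (f (x k) - f xs) + s * r * (k + r) / 2 * ‖g (y k)‖ ^ 2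

variable {f : E → ℝ}

theorem nesterovDecrease_nonneg (hmin : ∀ z, f xs ≤ f z) (hs : 0 ≤ s) (hr : 2 ≤ r) (k : ℕ) :
    0 ≤ nesterovDecrease f g xs x y s r k := by
  have := sub_nonneg.2 (hmin (x k))
  have : 0 ≤ r - 2 := by linarith
  unfold nesterovDecrease
  positivity

variable [InnerProductSpace ℝ E]

theorem nesterov_momentum_succ (hr : 0 ≤ r) (k : ℕ)
    (hx : x (k + 1) = y k - s • g (y k))
    (hy : y (k + 1) = x (k + 1) + ((k : ℝ) / ((k : ℝ) + r + 1)) • (x (k + 1) - x k)) :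
    ((k + 1 : ℕ) : ℝ) • (y (k + 1) - x (k + 1)) + r • (y (k + 1) - xs)
      = (k : ℝ) • (y k - x k) + r • (y k - xs) - (s * (k + r)) • g (y k) := by
  have hk : (k : ℝ) + r + 1 ≠ 0 := by positivity
  rw [hy, hx]
  push_cast
  match_scalars <;> field_simp <;> ring

noncomputable def nesterovEnergy (f : E → ℝ) (xs : E) (x y : ℕ → E) (s r : ℝ) (k : ℕ) : ℝ :=
  ((k : ℝ) + r - 1) ^ 2 * (f (x k) - f xs) + ‖(k : ℝ) • (y k - x k) + r • (y k - xs)‖ ^ 2 / (2 * s)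

theorem nesterovEnergy_nonneg (hmin : ∀ z, f xs ≤ f z) (hs : 0 ≤ s) (k : ℕ) :
    0 ≤ nesterovEnergy f xs x y s r k := by
  have := sub_nonneg.2 (hmin (x k))
  unfold nesterovEnergy
  positivity

variable [CompleteSpace E] {L : ℝ}

theorem nesterovEnergy_succ_add_le (hconv : ConvexOn ℝ univ f)
    (hgrad : ∀ z, HasGradientAt f (g z) z) (hlip : ∀ z w, ‖g z - g w‖ ≤ L * ‖z - w‖)
    (hmin : ∀ z, f xs ≤ f z) (hs : 0 < s) (hsL : s * L ≤ 1) (hr : 0 ≤ r) (k : ℕ)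
    (hx : x (k + 1) = y k - s • g (y k))
    (hy : y (k + 1) = x (k + 1) + ((k : ℝ) / ((k : ℝ) + r + 1)) • (x (k + 1) - x k)) :
    nesterovEnergy f xs x y s r (k + 1) + nesterovDecrease f g xs x y s r k
      ≤ nesterovEnergy f xs x y s r k := by
  have h₁ := apply_sub_smul_gradient_le hconv hgrad hlip hs.le hsL (y k) (x k)
  have h₂ := apply_sub_smul_gradient_le_of_isMin hconv hgrad hlip hmin hs.le hsL (y k)
  rw [← hx] at h₁ h₂
  have := lyapunov_step (a := k) (δ := f (x k) - f xs) (δ' := f (x (k + 1)) - f xs)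
    (v := g (y k)) (p := y k - x k) (q := y k - xs)
    (Nat.cast_nonneg k) hr hs (by linarith) (by linarith)
  rw [← nesterov_momentum_succ hr k hx hy] at this
  unfold nesterovEnergy nesterovDecrease
  push_cast at this ⊢
  linear_combination this

theorem mul_sub_le_nesterovDecrease (hconv : ConvexOn ℝ univ f)
    (hgrad : ∀ z, HasGradientAt f (g z) z) (hmin : ∀ z, f xs ≤ f z) (hs : 0 < s) (hr : 2 < r)
    (k : ℕ) (hx : x (k + 1) = y k - s • g (y k)) :
    ((k : ℝ) + 1) * (f (y k) - f xs)
      ≤ nesterovDecrease f g xs x y s r (k + 1) / (r - 2)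
        + 2 / r * nesterovDecrease f g xs x y s r k := by
  have hy := apply_le_apply_sub_smul_gradient_add hconv hgrad (s := s) (y k)
  rw [← hx] at hy
  have hx' : ((k : ℝ) + 1) * (f (x (k + 1)) - f xs)
      ≤ nesterovDecrease f g xs x y s r (k + 1) / (r - 2) := by
    rw [le_div_iff₀ (by linarith)]
    have := mul_nonneg (sq_nonneg (r - 1)) (sub_nonneg.2 (hmin (x (k + 1))))
    have : 0 ≤ s * r * ((k + 1 : ℕ) + r) / 2 * ‖g (y (k + 1))‖ ^ 2 := by positivity
    unfold nesterovDecrease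
    push_cast at this ⊢
    linarith
  have hg : ((k : ℝ) + 1) * (s * ‖g (y k)‖ ^ 2) ≤ 2 / r * nesterovDecrease f g xs x y s r k := by
    have hδ : 0 ≤ ((r - 2) * k + (r - 1) ^ 2) * (f (x k) - f xs) :=
      mul_nonneg (by nlinarith) (sub_nonneg.2 (hmin (x k)))
    calc ((k : ℝ) + 1) * (s * ‖g (y k)‖ ^ 2) ≤ (k + r) * (s * ‖g (y k)‖ ^ 2) := by
          gcongr; linarith
      _ = 2 / r * (s * r * (k + r) / 2 * ‖g (y k)‖ ^ 2) := by field_simp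
      _ ≤ 2 / r * nesterovDecrease f g xs x y s r k := by
          gcongr; exact le_add_of_nonneg_left hδ
  calc ((k : ℝ) + 1) * (f (y k) - f xs)
      ≤ ((k : ℝ) + 1) * ((f (x (k + 1)) - f xs) + s * ‖g (y k)‖ ^ 2) := by gcongr; linarith
    _ ≤ _ := by rw [mul_add]; exact add_le_add hx' hg

end Nesterov

theorem stmt_10_general {d : ℕ} (f : EuclideanSpace ℝ (Fin d) → ℝ)
    (g : EuclideanSpace ℝ (Fin d) → EuclideanSpace ℝ (Fin d)) (L : ℝ)
    (hconv : ConvexOn ℝ Set.univ f)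
    (hgrad : ∀ z, HasGradientAt f (g z) z)
    (hlip : ∀ z w, ‖g z - g w‖ ≤ L * ‖z - w‖)
    (xs : EuclideanSpace ℝ (Fin d)) (hmin : ∀ z, f xs ≤ f z)
    (s r : ℝ) (hs : 0 < s) (hsL : s ≤ 1 / L) (hr : 2 < r)
    (x y : ℕ → EuclideanSpace ℝ (Fin d))
    (hx : ∀ k : ℕ, x (k + 1) = y k - s • g (y k))
    (hy : ∀ k : ℕ, y (k + 1) = x (k + 1) + (((k : ℝ)) / ((k : ℝ) + r + 1)) • (x (k + 1) - x k)) :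
    Filter.Tendsto
      (fun k : ℕ => (k : ℝ) ^ 2 *
        (Finset.range (k + 1)).inf' Finset.nonempty_range_add_one (fun i => f (y i) - f xs))
      Filter.atTop (nhds 0) := by
  have hL : 0 < L := one_div_pos.mp (hs.trans_le hsL)
  have hsL' : s * L ≤ 1 := by rwa [le_div_iff₀ hL] at hsL
  have hdecrease : Summable (nesterovDecrease f g xs x y s r) :=
    summable_of_succ_add_le (nesterovEnergy_nonneg hmin hs.le)
      (nesterovDecrease_nonneg hmin hs.le hr.le)
      fun k => nesterovEnergy_succ_add_le hconv hgrad hlip hmin hs hsL' (by linarith) k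
        (hx k) (hy k)
  refine tendsto_sq_mul_inf'_of_summable (fun i => sub_nonneg.2 (hmin (y i))) ?_
  refine Summable.of_nonneg_of_le (fun k => mul_nonneg (by positivity) (sub_nonneg.2 (hmin _)))
    (fun k => mul_sub_le_nesterovDecrease hconv hgrad hmin hs hr k (hx k)) ?_
  exact (((summable_nat_add_iff 1).2 hdecrease).div_const _).add (hdecrease.mul_left _)

theorem stmt_10 {d : ℕ} (f : EuclideanSpace ℝ (Fin d) → ℝ)
    (g : EuclideanSpace ℝ (Fin d) → EuclideanSpace ℝ (Fin d)) (L : ℝ) (hL : 0 < L)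
    (hconv : ConvexOn ℝ Set.univ f)
    (hgrad : ∀ z, HasGradientAt f (g z) z)
    (hlip : ∀ z w, ‖g z - g w‖ ≤ L * ‖z - w‖)
    (xs : EuclideanSpace ℝ (Fin d)) (hmin : ∀ z, f xs ≤ f z)
    (s r : ℝ) (hs : 0 < s) (hsL : s ≤ 1 / L) (hr : 2 < r)
    (x y : ℕ → EuclideanSpace ℝ (Fin d))
    (hx0 : x 0 = y 0)
    (hx : ∀ k : ℕ, x (k + 1) = y k - s • g (y k))
    (hy : ∀ k : ℕ, y (k + 1) = x (k + 1) + (((k : ℝ)) / ((k : ℝ) + r + 1)) • (x (k + 1) - x k)) :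
    Filter.Tendsto
      (fun k : ℕ => (k : ℝ) ^ 2 *
        (Finset.range (k + 1)).inf' Finset.nonempty_range_add_one (fun i => f (y i) - f xs))
      Filter.atTop (nhds 0) :=
  stmt_10_general f g L hconv hgrad hlip xs hmin s r hs hsL hr x y hx hy
end

section
/- Under NAG with L-smooth convex f, 0 < s ≤ 1/L and r ≥ 2, the iterates x_k satisfy f(x_k) - f(x*) ≤ r²‖x_0 - x*‖² / (2sk(k+r)) for all k ≥ 1. -/
/-!
Put `r • z k = (k + r) • y k - k • x k`, so that `y k` is the weighted mean of `x k` and `z k`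
with weights `k` and `r`. The energy `2 s k (k + r) (f (x k) - f x*) + r² ‖z k - x*‖²` does not
increase along the scheme. Indeed, the gradient step gives `f (x (k+1)) ≤ f (y k) - s/2 ‖∇f (y k)‖²`;
convexity at `y k` towards `x k` and `x*` turns this into a bound by `k (f (x k) - f x*)` plus
`r ⟪∇f (y k), z k - x*⟫`, and that inner product is exactly what the update
`z (k+1) = z k - (s (k + r) / r) ∇f (y k)` takes away from `r² ‖z k - x*‖²`. The weight `r ≥ 2`
ensures `(k + 1)(k + 1 + r) ≤ (k + r)²`. Hence the energy at step `k` is at most its initial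
value `r² ‖x 0 - x*‖²`.
-/
open scoped RealInnerProductSpace

variable {E : Type*} [NormedAddCommGroup E] [InnerProductSpace ℝ E] {f : E → ℝ}

section Gradient

variable [CompleteSpace E]

theorem HasGradientAt.hasDerivAt_comp_lineMap {g' a b : E} {t : ℝ}
    (h : HasGradientAt f g' (AffineMap.lineMap a b t)) :
    HasDerivAt (f ∘ AffineMap.lineMap a b) ⟪g', b - a⟫ t := by
  simpa using h.hasFDerivAt.comp_hasDerivAt t AffineMap.hasDerivAt_lineMap

theorem ConvexOn.add_inner_le_of_hasGradientAt {s : Set E} (hf : ConvexOn ℝ s f) {a b g' : E}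
    (ha : a ∈ s) (hb : b ∈ s) (hg : HasGradientAt f g' a) : f a + ⟪g', b - a⟫ ≤ f b := by
  have hslope := (hf.comp_affineMap (AffineMap.lineMap a b)).le_slope_of_hasDerivAt
    (x := 0) (y := 1) (by simpa using ha) (by simpa using hb) one_pos
    (HasGradientAt.hasDerivAt_comp_lineMap (by simpa using hg))
  simp only [slope_def_field, Function.comp_apply, AffineMap.lineMap_apply_one,
    AffineMap.lineMap_apply_zero, sub_zero, div_one] at hslope
  linarith

theorem le_add_inner_add_mul_sq_of_hasGradientAt {g : E → E} {L : ℝ}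
    (hgrad : ∀ z, HasGradientAt f (g z) z) (hlip : ∀ z w, ‖g z - g w‖ ≤ L * ‖z - w‖) (a b : E) :
    f b ≤ f a + ⟪g a, b - a⟫ + L / 2 * ‖b - a‖ ^ 2 := by
  -- the claim is `ψ 1 ≤ ψ 0`, and `ψ' ≤ 0` on `[0, ∞)` by the Lipschitz bound on `g`
  set ψ : ℝ → ℝ := fun t =>
    f (AffineMap.lineMap a b t) - t * ⟪g a, b - a⟫ - L / 2 * t ^ 2 * ‖b - a‖ ^ 2
  have hψ (t : ℝ) : HasDerivAt ψ
      (⟪g (AffineMap.lineMap a b t) - g a, b - a⟫ - L * t * ‖b - a‖ ^ 2) t := by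
    refine ((((hgrad _).hasDerivAt_comp_lineMap (a := a) (b := b) (t := t)).sub
      ((hasDerivAt_id t).mul_const ⟪g a, b - a⟫)).sub
      (((hasDerivAt_pow 2 t).const_mul (L / 2)).mul_const (‖b - a‖ ^ 2))).congr_deriv ?_
    rw [inner_sub_left]
    simp only [Nat.cast_ofNat, Nat.add_one_sub_one, pow_one, one_mul]
    ring
  have hψ' (t : ℝ) (ht : 0 ≤ t) :
      ⟪g (AffineMap.lineMap a b t) - g a, b - a⟫ - L * t * ‖b - a‖ ^ 2 ≤ 0 := by
    have hdist : AffineMap.lineMap a b t - a = t • (b - a) := AffineMap.lineMap_vsub_left a b t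
    rw [sub_nonpos]
    calc ⟪g (AffineMap.lineMap a b t) - g a, b - a⟫
        ≤ ‖g (AffineMap.lineMap a b t) - g a‖ * ‖b - a‖ := real_inner_le_norm _ _
      _ ≤ L * ‖t • (b - a)‖ * ‖b - a‖ := by
          rw [← hdist]; gcongr; exact hlip _ _
      _ = L * t * ‖b - a‖ ^ 2 := by rw [norm_smul, Real.norm_of_nonneg ht]; ring
  have hanti : AntitoneOn ψ (Set.Ici 0) :=
    antitoneOn_of_hasDerivWithinAt_nonpos (convex_Ici 0)
      (fun t _ => (hψ t).continuousAt.continuousWithinAt)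
      (fun t _ => (hψ t).hasDerivWithinAt)
      (fun t ht => hψ' t (interior_subset ht))
  have := hanti Set.self_mem_Ici (Set.mem_Ici.mpr zero_le_one) zero_le_one
  simp only [ψ, AffineMap.lineMap_apply_one, AffineMap.lineMap_apply_zero] at this
  linarith

theorem apply_sub_smul_le_of_lipschitz_gradient {g : E → E} {L s : ℝ}
    (hgrad : ∀ z, HasGradientAt f (g z) z) (hlip : ∀ z w, ‖g z - g w‖ ≤ L * ‖z - w‖)
    (hs : 0 ≤ s) (hLs : L * s ≤ 1) (y : E) :
    f (y - s • g y) ≤ f y - s / 2 * ‖g y‖ ^ 2 := by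
  have h := le_add_inner_add_mul_sq_of_hasGradientAt hgrad hlip y (y - s • g y)
  rw [sub_sub_cancel_left, inner_neg_right, real_inner_smul_right, real_inner_self_eq_norm_sq,
    norm_neg, norm_smul, Real.norm_of_nonneg hs] at h
  nlinarith [mul_nonneg (mul_nonneg hs (sub_nonneg.mpr hLs)) (sq_nonneg ‖g y‖)]

end Gradient

section Nesterov

variable {g : E → E} {s r : ℝ} {x y : ℕ → E} {xs : E} {k : ℕ}

/-- The point `z k` with `y k = (k • x k + r • z k) / (k + r)`. -/
noncomputable def nagAux (r : ℝ) (x y : ℕ → E) (k : ℕ) : E :=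
  ((k + r) / r) • y k - (k / r) • x k

noncomputable def nagEnergy (f : E → ℝ) (s r : ℝ) (x y : ℕ → E) (xs : E) (k : ℕ) : ℝ :=
  2 * s * k * (k + r) * (f (x k) - f xs) + r ^ 2 * ‖nagAux r x y k - xs‖ ^ 2

theorem nagAux_zero (hr : r ≠ 0) (h0 : x 0 = y 0) : nagAux r x y 0 = x 0 := by
  simp [nagAux, div_self hr, h0]

theorem nagAux_succ (hr : 0 < r) (hxk : x (k + 1) = y k - s • g (y k))
    (hyk : y (k + 1) = x (k + 1) + ((k : ℝ) / (k + r + 1)) • (x (k + 1) - x k)) :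
    nagAux r x y (k + 1) = nagAux r x y k - (s * (k + r) / r) • g (y k) := by
  have : (k : ℝ) + r + 1 ≠ 0 := by positivity
  simp only [nagAux, hyk, hxk]
  push_cast
  match_scalars <;> field_simp <;> ring

variable [CompleteSpace E]

theorem nag_gap_succ_le (hconv : ConvexOn ℝ Set.univ f) (hgrad : HasGradientAt f (g (y k)) (y k))
    (hr : 0 < r) (hdesc : f (x (k + 1)) ≤ f (y k) - s / 2 * ‖g (y k)‖ ^ 2) :
    (k + r) * (f (x (k + 1)) - f xs) ≤ k * (f (x k) - f xs)
      + r * ⟪g (y k), nagAux r x y k - xs⟫ - s / 2 * (k + r) * ‖g (y k)‖ ^ 2 := by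
  have hx := hconv.add_inner_le_of_hasGradientAt (Set.mem_univ _) (Set.mem_univ (x k)) hgrad
  have hxs := hconv.add_inner_le_of_hasGradientAt (Set.mem_univ _) (Set.mem_univ xs) hgrad
  have hcomb : (k : ℝ) • (x k - y k) + r • (xs - y k) = -(r • (nagAux r x y k - xs)) := by
    simp only [nagAux]
    match_scalars <;> field_simp
    ring
  have hinner : (k : ℝ) * ⟪g (y k), x k - y k⟫ + r * ⟪g (y k), xs - y k⟫
      = -(r * ⟪g (y k), nagAux r x y k - xs⟫) := by
    rw [← real_inner_smul_right, ← real_inner_smul_right, ← inner_add_right, hcomb,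
      inner_neg_right, real_inner_smul_right]
  have hk : (0 : ℝ) ≤ k := k.cast_nonneg
  nlinarith [mul_le_mul_of_nonneg_left hx hk, mul_le_mul_of_nonneg_left hxs hr.le,
    mul_le_mul_of_nonneg_left hdesc (by positivity : (0 : ℝ) ≤ k + r)]

theorem nagEnergy_succ_le (hconv : ConvexOn ℝ Set.univ f) (hgrad : HasGradientAt f (g (y k)) (y k))
    (hmin : f xs ≤ f (x (k + 1))) (hs : 0 < s) (hr : 2 ≤ r)
    (hdesc : f (x (k + 1)) ≤ f (y k) - s / 2 * ‖g (y k)‖ ^ 2)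
    (hxk : x (k + 1) = y k - s • g (y k))
    (hyk : y (k + 1) = x (k + 1) + ((k : ℝ) / (k + r + 1)) • (x (k + 1) - x k)) :
    nagEnergy f s r x y xs (k + 1) ≤ nagEnergy f s r x y xs k := by
  have hr0 : 0 < r := by linarith
  set G := g (y k)
  set z := nagAux r x y k
  have hdist : r ^ 2 * ‖nagAux r x y (k + 1) - xs‖ ^ 2
      = r ^ 2 * ‖z - xs‖ ^ 2 - 2 * s * (k + r) * r * ⟪G, z - xs⟫
        + s ^ 2 * (k + r) ^ 2 * ‖G‖ ^ 2 := by
    rw [nagAux_succ hr0 hxk hyk, sub_right_comm, norm_sub_sq_real, real_inner_smul_right,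
      norm_smul, Real.norm_eq_abs, mul_pow, sq_abs, real_inner_comm]
    field_simp
    ring
  have hbound := nag_gap_succ_le (xs := xs) hconv hgrad hr0 hdesc
  -- this is where `r ≥ 2` enters
  have hcoef : ((k : ℝ) + 1) * (k + 1 + r) ≤ (k + r) ^ 2 := by nlinarith [k.cast_nonneg (α := ℝ)]
  simp only [nagEnergy]
  push_cast
  nlinarith [mul_le_mul_of_nonneg_left hbound (by positivity : (0 : ℝ) ≤ 2 * s * (k + r)),
    mul_le_mul_of_nonneg_right (mul_le_mul_of_nonneg_left hcoef (by positivity : (0 : ℝ) ≤ 2 * s))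
      (sub_nonneg.mpr hmin)]

end Nesterov

theorem stmt_12 {d : ℕ} (f : EuclideanSpace ℝ (Fin d) → ℝ)
    (g : EuclideanSpace ℝ (Fin d) → EuclideanSpace ℝ (Fin d)) (L : ℝ) (hL : 0 < L)
    (hconv : ConvexOn ℝ Set.univ f)
    (hgrad : ∀ z, HasGradientAt f (g z) z)
    (hlip : ∀ z w, ‖g z - g w‖ ≤ L * ‖z - w‖)
    (xs : EuclideanSpace ℝ (Fin d)) (hmin : ∀ z, f xs ≤ f z)
    (s r : ℝ) (hs : 0 < s) (hsL : s ≤ 1 / L) (hr : 2 ≤ r)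
    (x y : ℕ → EuclideanSpace ℝ (Fin d))
    (hx0 : x 0 = y 0)
    (hx : ∀ k : ℕ, x (k + 1) = y k - s • g (y k))
    (hy : ∀ k : ℕ, y (k + 1) = x (k + 1) + (((k : ℝ)) / ((k : ℝ) + r + 1)) • (x (k + 1) - x k)) :
    ∀ k : ℕ, 1 ≤ k →
      f (x k) - f xs ≤ r ^ 2 * ‖x 0 - xs‖ ^ 2 / (2 * s * (k : ℝ) * ((k : ℝ) + r)) := by
  have hLs : L * s ≤ 1 := by rwa [le_div_iff₀' hL] at hsL
  have henergy (k : ℕ) : nagEnergy f s r x y xs k ≤ r ^ 2 * ‖x 0 - xs‖ ^ 2 := by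
    induction k with
    | zero => simp [nagEnergy, nagAux_zero (by linarith : r ≠ 0) hx0]
    | succ k ih =>
      refine le_trans ?_ ih
      refine nagEnergy_succ_le hconv (hgrad _) (hmin _) hs hr ?_ (hx k) (hy k)
      rw [hx k]
      exact apply_sub_smul_le_of_lipschitz_gradient hgrad hlip hs.le hLs (y k)
  intro k hk
  have hk' : (0 : ℝ) < k := by exact_mod_cast hk
  rw [le_div_iff₀ (by positivity)]
  have := henergy k
  simp only [nagEnergy] at this
  nlinarith [mul_nonneg (sq_nonneg r) (sq_nonneg ‖nagAux r x y k - xs‖)]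
end
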